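/- arXiv:math-ph/0407019 — 6 statements merged into one kernel-verified Lean document; each statement's English description precedes it below -/
import Mathlib

section
/- Assume the p=3 parasupersymmetry algebra. Then the operators Q²Q†² and Q†Q commute: Q²Q†²·Q†Q = Q†Q·Q²Q†². (The proof uses relations (ii) and (iv) to rewrite Q²Q†³Q − Q†Q³Q†² and reduces the claim to the commutativity of Q²Q†² with QQ†.) -/
open ContinuousLinearMap

/-- Assuming the p=3 parasupersymmetry algebra,
`Q²Q†²` and `Q†Q` commute. -/
theorem stmt1 {𝓗 : Type*} [NormedAddCommGroup 𝓗] [InnerProductSpace ℂ 𝓗] [CompleteSpace 𝓗]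
    (Q H : 𝓗 →L[ℂ] 𝓗) (hH : IsSelfAdjoint H)
    (hQH : Q * H = H * Q) (hQdH : adjoint Q * H = H * adjoint Q)
    (hii : Q ^ 3 * adjoint Q + Q ^ 2 * adjoint Q * Q + Q * adjoint Q * Q ^ 2
      + adjoint Q * Q ^ 3 = 6 * (Q ^ 2 * H))
    (hiii : Q * (adjoint Q) ^ 2 * Q = adjoint Q * Q ^ 2 * adjoint Q)
    (hiv : (adjoint Q) ^ 3 * Q + (adjoint Q) ^ 2 * Q * adjoint Q
      + adjoint Q * Q * (adjoint Q) ^ 2 + Q * (adjoint Q) ^ 3 = 6 * ((adjoint Q) ^ 2 * H))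
    (hQ4 : Q ^ 4 = 0) (hQd4 : (adjoint Q) ^ 4 = 0) :
    (Q ^ 2 * (adjoint Q) ^ 2) * (adjoint Q * Q)
      = (adjoint Q * Q) * (Q ^ 2 * (adjoint Q) ^ 2) := by
  set D := adjoint Q with hD
  have hHD2 : H * D ^ 2 = D ^ 2 * H := by
    calc H * D ^ 2 = (H * D) * D := by noncomm_ring
    _ = (D * H) * D := by rw [← hQdH]
    _ = D * (D * H) := by rw [mul_assoc, hQdH]
    _ = D ^ 2 * H := by noncomm_ring
  have e1 : Q ^ 2 * D ^ 3 * Q + Q ^ 2 * D ^ 2 * Q * D + Q ^ 2 * D * Q * D ^ 2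
      + Q ^ 3 * D ^ 3 = 6 * (Q ^ 2 * D ^ 2 * H) := by
    calc Q ^ 2 * D ^ 3 * Q + Q ^ 2 * D ^ 2 * Q * D + Q ^ 2 * D * Q * D ^ 2 + Q ^ 3 * D ^ 3
        = Q ^ 2 * (D ^ 3 * Q + D ^ 2 * Q * D + D * Q * D ^ 2 + Q * D ^ 3) := by noncomm_ring
      _ = Q ^ 2 * (6 * (D ^ 2 * H)) := by rw [hiv]
      _ = 6 * (Q ^ 2 * D ^ 2 * H) := by noncomm_ring
  have e2 : Q ^ 3 * D ^ 3 + Q ^ 2 * D * Q * D ^ 2 + Q * D * Q ^ 2 * D ^ 2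
      + D * Q ^ 3 * D ^ 2 = 6 * (Q ^ 2 * D ^ 2 * H) := by
    calc Q ^ 3 * D ^ 3 + Q ^ 2 * D * Q * D ^ 2 + Q * D * Q ^ 2 * D ^ 2 + D * Q ^ 3 * D ^ 2
        = (Q ^ 3 * D + Q ^ 2 * D * Q + Q * D * Q ^ 2 + D * Q ^ 3) * D ^ 2 := by noncomm_ring
      _ = 6 * (Q ^ 2 * H) * D ^ 2 := by rw [hii]
      _ = 6 * (Q ^ 2 * (H * D ^ 2)) := by noncomm_ring
      _ = 6 * (Q ^ 2 * (D ^ 2 * H)) := by rw [hHD2]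
      _ = 6 * (Q ^ 2 * D ^ 2 * H) := by noncomm_ring
  have key0 : Q ^ 2 * D ^ 3 * Q + Q ^ 2 * D ^ 2 * Q * D
      = Q * D * Q ^ 2 * D ^ 2 + D * Q ^ 3 * D ^ 2 := by
    have h : (Q ^ 2 * D ^ 3 * Q + Q ^ 2 * D ^ 2 * Q * D) + (Q ^ 2 * D * Q * D ^ 2 + Q ^ 3 * D ^ 3)
        = (Q * D * Q ^ 2 * D ^ 2 + D * Q ^ 3 * D ^ 2)
          + (Q ^ 2 * D * Q * D ^ 2 + Q ^ 3 * D ^ 3) := by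
      calc (Q ^ 2 * D ^ 3 * Q + Q ^ 2 * D ^ 2 * Q * D) + (Q ^ 2 * D * Q * D ^ 2 + Q ^ 3 * D ^ 3)
          = Q ^ 2 * D ^ 3 * Q + Q ^ 2 * D ^ 2 * Q * D + Q ^ 2 * D * Q * D ^ 2 + Q ^ 3 * D ^ 3 := by
            noncomm_ring
        _ = 6 * (Q ^ 2 * D ^ 2 * H) := e1
        _ = Q ^ 3 * D ^ 3 + Q ^ 2 * D * Q * D ^ 2 + Q * D * Q ^ 2 * D ^ 2 + D * Q ^ 3 * D ^ 2 :=
            e2.symm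
        _ = _ := by noncomm_ring
    exact add_right_cancel h
  have h3 : Q * D * Q ^ 2 * D ^ 2 = Q ^ 2 * D ^ 2 * Q * D := by
    calc Q * D * Q ^ 2 * D ^ 2 = Q * (D * Q ^ 2 * D) * D := by noncomm_ring
      _ = Q * (Q * D ^ 2 * Q) * D := by rw [← hiii]
      _ = Q ^ 2 * D ^ 2 * Q * D := by noncomm_ring
  have key : Q ^ 2 * D ^ 3 * Q = D * Q ^ 3 * D ^ 2 := by
    have h : Q ^ 2 * D ^ 3 * Q + Q ^ 2 * D ^ 2 * Q * D
        = D * Q ^ 3 * D ^ 2 + Q ^ 2 * D ^ 2 * Q * D := by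
      rw [key0, h3, add_comm]
    exact add_right_cancel h
  calc (Q ^ 2 * D ^ 2) * (D * Q) = Q ^ 2 * D ^ 3 * Q := by noncomm_ring
    _ = D * Q ^ 3 * D ^ 2 := key
    _ = (D * Q) * (Q ^ 2 * D ^ 2) := by noncomm_ring
end

section
/- Assume relation (iii) of the p=3 parasupersymmetry algebra, i.e. QQ†²Q = Q†Q²Q†. Let Ψ ∈ 𝓗 satisfy QQ†Ψ = cΨ with c ≠ 0 and Q²Q†²Ψ = dΨ, for scalars c, d ∈ ℂ. Then QQ†(Q†Ψ) = (d/c)·Q†Ψ; in particular Q†Ψ is either zero or an eigenvector of QQ†. -/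
open ContinuousLinearMap

/-- Assuming relation (iii) of the p=3 parasupersymmetry algebra, if
`QQ†Ψ = cΨ` with `c ≠ 0` and `Q²Q†²Ψ = dΨ`, then `QQ†(Q†Ψ) = (d/c)·Q†Ψ`. -/
theorem stmt3 {𝓗 : Type*} [NormedAddCommGroup 𝓗] [InnerProductSpace ℂ 𝓗] [CompleteSpace 𝓗]
    (Q : 𝓗 →L[ℂ] 𝓗)
    (hiii : Q * (adjoint Q) ^ 2 * Q = adjoint Q * Q ^ 2 * adjoint Q)
    (Ψ : 𝓗) (c d : ℂ) (hc : c ≠ 0)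
    (hΨc : (Q * adjoint Q) Ψ = c • Ψ)
    (hΨd : (Q ^ 2 * (adjoint Q) ^ 2) Ψ = d • Ψ) :
    (Q * adjoint Q) (adjoint Q Ψ) = (d / c) • adjoint Q Ψ := by
  set A := adjoint Q with hA
  have key : c • ((Q * A) (A Ψ)) = d • A Ψ := by
    calc c • ((Q * A) (A Ψ)) = (Q * A * A) (c • Ψ) := by
          simp [mul_apply]
    _ = (Q * A ^ 2 * Q) (A Ψ) := by
          rw [← hΨc]; simp [mul_apply, pow_two]
    _ = (A * Q ^ 2 * A) (A Ψ) := by rw [hiii]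
    _ = A ((Q ^ 2 * A ^ 2) Ψ) := by simp [mul_apply, pow_two]
    _ = d • A Ψ := by rw [hΨd, map_smul]
  have h2 := congrArg (fun x => c⁻¹ • x) key
  simpa [smul_smul, inv_mul_cancel₀ hc, div_eq_inv_mul] using h2
end

section
/- (Proposition 2) Assume the p=3 parasupersymmetry algebra. If Ψ ∈ 𝓗 is a simultaneous eigenvector of S (i.e. Ψ ≠ 0 and Ψ is an eigenvector of each of the nine operators in S), then each of QΨ and Q†Ψ is either zero or again a simultaneous eigenvector of all nine operators in S. -/
open ContinuousLinearMap

/-- The set `S` of nine operators `{H, QQ†, Q†Q, Q²Q†², Q†²Q², QQ†²Q, Q†Q²Q†, QQ†QQ†, Q†QQ†Q}`. -/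
def opSetS {𝓗 : Type*} [NormedAddCommGroup 𝓗] [InnerProductSpace ℂ 𝓗] [CompleteSpace 𝓗]
    (Q H : 𝓗 →L[ℂ] 𝓗) : Set (𝓗 →L[ℂ] 𝓗) :=
  {H, Q * adjoint Q, adjoint Q * Q,
    Q ^ 2 * (adjoint Q) ^ 2, (adjoint Q) ^ 2 * Q ^ 2,
    Q * (adjoint Q) ^ 2 * Q, adjoint Q * Q ^ 2 * adjoint Q,
    Q * adjoint Q * Q * adjoint Q, adjoint Q * Q * adjoint Q * Q}

/-- `Ψ` is a simultaneous eigenvector of the nine operators in `S`. -/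
def IsSimulEig {𝓗 : Type*} [NormedAddCommGroup 𝓗] [InnerProductSpace ℂ 𝓗] [CompleteSpace 𝓗]
    (Q H : 𝓗 →L[ℂ] 𝓗) (Ψ : 𝓗) : Prop :=
  Ψ ≠ 0 ∧ ∀ A ∈ opSetS Q H, ∃ μ : ℂ, A Ψ = μ • Ψ

/-!
For every `A ∈ S` other than `Q†Q` and `Q†²Q²` there is a `B ∈ S` with `A Q = Q B` (for `Q†Q²Q†`
after rewriting it by (iii)), so `QΨ` inherits the eigenvalue of `B`. Write `Q†QΨ = bΨ` and
`Q†²Q²Ψ = dΨ`; then `b ≠ 0` because `QΨ ≠ 0`, and relation (iii) applied to `QΨ` reads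
`b Q†Q(QΨ) = d QΨ`. Relation (ii) applied to `Ψ` makes `Q²Ψ` an eigenvector of `Q†Q`, which
handles `Q†²Q² = Q†(Q†Q)Q`. The claim for `Q†Ψ` follows by symmetry: `S` is invariant under
`Q ↔ Q†`, which exchanges (ii) and (iv) and fixes (iii).
-/

section Intertwining

variable {R M : Type*} [CommSemiring R] [AddCommMonoid M] [Module R M] [TopologicalSpace M]

theorem ContinuousLinearMap.apply_apply_eq_smul_of_mul_eq_mul {X T Y : M →L[R] M}
    (h : X * T = T * Y) {v : M} {μ : R} (hv : Y v = μ • v) : X (T v) = μ • T v := by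
  rw [← mul_apply_eq_comp, h, mul_apply_eq_comp, hv, map_smul]

theorem ContinuousLinearMap.mul_apply_eq_smul {A B : M →L[R] M} {v : M} {μ ν : R}
    (hA : A v = μ • v) (hB : B v = ν • v) : (A * B) v = (μ * ν) • v := by
  rw [mul_apply_eq_comp, hB, map_smul, hA, smul_smul, mul_comm]

end Intertwining

theorem ContinuousLinearMap.apply_eq_zero_of_adjoint_apply_apply_eq_zero
    {𝕜 E F : Type*} [RCLike 𝕜] [NormedAddCommGroup E] [InnerProductSpace 𝕜 E] [CompleteSpace E]
    [NormedAddCommGroup F] [InnerProductSpace 𝕜 F] [CompleteSpace F]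
    {T : E →L[𝕜] F} {v : E} (h : adjoint T (T v) = 0) : T v = 0 := by
  have hker : v ∈ (adjoint T ∘L T).ker := h
  rwa [ker_adjoint_comp_self] at hker

section Parasupersymmetry

variable {𝓗 : Type*} [NormedAddCommGroup 𝓗] [InnerProductSpace ℂ 𝓗] [CompleteSpace 𝓗]

theorem forall_mem_opSetS {Q H : 𝓗 →L[ℂ] 𝓗} {P : (𝓗 →L[ℂ] 𝓗) → Prop} :
    (∀ A ∈ opSetS Q H, P A) ↔
      P H ∧ P (Q * adjoint Q) ∧ P (adjoint Q * Q) ∧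
      P (Q ^ 2 * (adjoint Q) ^ 2) ∧ P ((adjoint Q) ^ 2 * Q ^ 2) ∧
      P (Q * (adjoint Q) ^ 2 * Q) ∧ P (adjoint Q * Q ^ 2 * adjoint Q) ∧
      P (Q * adjoint Q * Q * adjoint Q) ∧ P (adjoint Q * Q * adjoint Q * Q) := by
  simp only [opSetS, Set.forall_mem_insert, Set.mem_singleton_iff, forall_eq]

theorem opSetS_adjoint (Q H : 𝓗 →L[ℂ] 𝓗) : opSetS (adjoint Q) H = opSetS Q H := by
  ext A
  simp only [opSetS, adjoint_adjoint, Set.mem_insert_iff, Set.mem_singleton_iff]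
  tauto

theorem isSimulEig_adjoint_iff {Q H : 𝓗 →L[ℂ] 𝓗} {v : 𝓗} :
    IsSimulEig (adjoint Q) H v ↔ IsSimulEig Q H v := by
  rw [IsSimulEig, IsSimulEig, opSetS_adjoint]

theorem IsSimulEig.apply_of_ne_zero {Q H : 𝓗 →L[ℂ] 𝓗} (hQH : Q * H = H * Q)
    (hii : Q ^ 3 * adjoint Q + Q ^ 2 * adjoint Q * Q + Q * adjoint Q * Q ^ 2
      + adjoint Q * Q ^ 3 = 6 * (Q ^ 2 * H))
    (hiii : Q * (adjoint Q) ^ 2 * Q = adjoint Q * Q ^ 2 * adjoint Q)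
    {Ψ : 𝓗} (hΨ : IsSimulEig Q H Ψ) (hQΨ : Q Ψ ≠ 0) : IsSimulEig Q H (Q Ψ) := by
  obtain ⟨-, hS⟩ := hΨ
  obtain ⟨⟨E, hE⟩, ⟨a, ha⟩, ⟨b, hb⟩, -, ⟨d, hd⟩, ⟨e, he⟩, -, -, ⟨f, hf⟩⟩ :=
    forall_mem_opSetS.1 hS
  have hb0 : b ≠ 0 := by
    rintro rfl
    exact hQΨ (apply_eq_zero_of_adjoint_apply_apply_eq_zero (by simpa using hb))
  have hQHQ : (Q * adjoint Q ^ 2 * Q) (Q Ψ) = d • Q Ψ :=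
    apply_apply_eq_smul_of_mul_eq_mul (by noncomm_ring) hd
  have hQdQ : (adjoint Q * Q) (Q Ψ) = (d / b) • Q Ψ := by
    have h : b • (adjoint Q * Q) (Q Ψ) = d • Q Ψ := calc
      _ = (adjoint Q * Q * Q) (b • Ψ) := by rw [map_smul]; rfl
      _ = (adjoint Q * Q ^ 2 * adjoint Q) (Q Ψ) := by
        rw [← hb]; simp only [mul_apply_eq_comp, sq]
      _ = d • Q Ψ := by rw [← hiii, hQHQ]
    rw [div_eq_inv_mul, mul_smul, ← h, inv_smul_smul₀ hb0]
  have hQdQ2 : (adjoint Q * Q) (Q (Q Ψ)) = (6 * E - a - b - d / b) • Q (Q Ψ) := by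
    have h := congrArg (· Ψ) hii
    simp only [add_apply, mul_apply_eq_comp, pow_succ, pow_zero, one_mul, ofNat_apply]
      at h ha hb hE hQdQ ⊢
    rw [ha, hb, hQdQ, hE] at h
    simp only [map_smul, ← Nat.cast_smul_eq_nsmul ℂ] at h
    linear_combination (norm := module) h
  refine ⟨hQΨ, forall_mem_opSetS.2 ⟨⟨E, ?_⟩, ⟨b, ?_⟩, ⟨d / b, hQdQ⟩, ⟨e, ?_⟩,
    ⟨(6 * E - a - b - d / b) * (d / b), ?_⟩, ⟨d, hQHQ⟩, ⟨d, hiii ▸ hQHQ⟩, ⟨f, ?_⟩,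
    ⟨d / b * (d / b), ?_⟩⟩⟩
  · exact apply_apply_eq_smul_of_mul_eq_mul hQH.symm hE
  · exact apply_apply_eq_smul_of_mul_eq_mul (by noncomm_ring) hb
  · exact apply_apply_eq_smul_of_mul_eq_mul (by noncomm_ring) he
  · rw [show adjoint Q ^ 2 * Q ^ 2 = adjoint Q * (adjoint Q * Q) * Q by noncomm_ring,
      mul_apply_eq_comp, mul_apply_eq_comp, hQdQ2, map_smul, ← mul_apply_eq_comp, hQdQ, smul_smul]
  · exact apply_apply_eq_smul_of_mul_eq_mul (by noncomm_ring) hf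
  · rw [mul_assoc (adjoint Q * Q)]
    exact mul_apply_eq_smul hQdQ hQdQ

end Parasupersymmetry

theorem stmt5_general {𝓗 : Type*} [NormedAddCommGroup 𝓗] [InnerProductSpace ℂ 𝓗] [CompleteSpace 𝓗]
    (Q H : 𝓗 →L[ℂ] 𝓗) (hQH : Q * H = H * Q) (hQdH : adjoint Q * H = H * adjoint Q)
    (hii : Q ^ 3 * adjoint Q + Q ^ 2 * adjoint Q * Q + Q * adjoint Q * Q ^ 2
      + adjoint Q * Q ^ 3 = 6 * (Q ^ 2 * H))
    (hiii : Q * (adjoint Q) ^ 2 * Q = adjoint Q * Q ^ 2 * adjoint Q)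
    (hiv : (adjoint Q) ^ 3 * Q + (adjoint Q) ^ 2 * Q * adjoint Q
      + adjoint Q * Q * (adjoint Q) ^ 2 + Q * (adjoint Q) ^ 3 = 6 * ((adjoint Q) ^ 2 * H))
    (Ψ : 𝓗) (hΨ : IsSimulEig Q H Ψ) :
    (Q Ψ = 0 ∨ IsSimulEig Q H (Q Ψ)) ∧
      (adjoint Q Ψ = 0 ∨ IsSimulEig Q H (adjoint Q Ψ)) := by
  refine ⟨or_iff_not_imp_left.2 (hΨ.apply_of_ne_zero hQH hii hiii), or_iff_not_imp_left.2 ?_⟩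
  intro hQdΨ
  rw [← isSimulEig_adjoint_iff] at hΨ ⊢
  exact hΨ.apply_of_ne_zero hQdH (by rwa [adjoint_adjoint])
    (by rw [adjoint_adjoint]; exact hiii.symm) hQdΨ

/-- Proposition 2: Assuming the p=3 parasupersymmetry algebra, if `Ψ` is a
simultaneous eigenvector of `S`, then each of `QΨ` and `Q†Ψ` is either zero or again a
simultaneous eigenvector of all nine operators in `S`. -/
theorem stmt5 {𝓗 : Type*} [NormedAddCommGroup 𝓗] [InnerProductSpace ℂ 𝓗] [CompleteSpace 𝓗]
    (Q H : 𝓗 →L[ℂ] 𝓗) (hH : IsSelfAdjoint H)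
    (hQH : Q * H = H * Q) (hQdH : adjoint Q * H = H * adjoint Q)
    (hii : Q ^ 3 * adjoint Q + Q ^ 2 * adjoint Q * Q + Q * adjoint Q * Q ^ 2
      + adjoint Q * Q ^ 3 = 6 * (Q ^ 2 * H))
    (hiii : Q * (adjoint Q) ^ 2 * Q = adjoint Q * Q ^ 2 * adjoint Q)
    (hiv : (adjoint Q) ^ 3 * Q + (adjoint Q) ^ 2 * Q * adjoint Q
      + adjoint Q * Q * (adjoint Q) ^ 2 + Q * (adjoint Q) ^ 3 = 6 * ((adjoint Q) ^ 2 * H))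
    (hQ4 : Q ^ 4 = 0) (hQd4 : (adjoint Q) ^ 4 = 0)
    (Ψ : 𝓗) (hΨ : IsSimulEig Q H Ψ) :
    (Q Ψ = 0 ∨ IsSimulEig Q H (Q Ψ)) ∧
      (adjoint Q Ψ = 0 ∨ IsSimulEig Q H (adjoint Q Ψ)) :=
  stmt5_general Q H hQH hQdH hii hiii hiv Ψ hΨ
end

section
/- Assume the p=3 parasupersymmetry algebra and let Ψ be a simultaneous eigenvector of S. Then for every finite word w in the two letters Q and Q† (i.e. every finite composition of the operators Q and Q†), there exist a scalar λ ∈ ℂ and a natural number k ≤ 3 such that either wΨ = λ·QᵏΨ or wΨ = λ·(Q†)ᵏΨ. -/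
open ContinuousLinearMap

/-- The operator corresponding to a finite word in the two letters `Q` (encoded `true`)
and `Q†` (encoded `false`): the product (composition) of the corresponding operators. -/
noncomputable def wordOp {𝓗 : Type*} [NormedAddCommGroup 𝓗] [InnerProductSpace ℂ 𝓗] [CompleteSpace 𝓗]
    (Q : 𝓗 →L[ℂ] 𝓗) (w : List Bool) : 𝓗 →L[ℂ] 𝓗 :=
  (w.map (fun b => if b then Q else adjoint Q)).prod

/-! Write `A = Q†`. The eigenvalue equations for `H`, `QA`, `AQ` and `A²Q²`, together with
relations (ii) and (iii), show that `A` lowers the chain `Ψ, QΨ, Q²Ψ, Q³Ψ` up to scalars: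
`A Qᵏ⁺¹Ψ ∈ ℂ · QᵏΨ`. The key case is `k = 1`: (iii) applied to `QΨ` gives `d • QΨ = b • AQ²Ψ`,
where `AQΨ = bΨ` and `A²Q²Ψ = dΨ`, and if `b = 0` then `QΨ = 0` because `ker (Q†Q) = ker Q`.
The algebra is invariant under `Q ↔ Q†` (which swaps (ii) and (iv) and fixes `S`), so `Q` lowers
the chain `AᵏΨ` in the same way. Since `Q⁴ = A⁴ = 0`, the union of the lines through `QᵏΨ` and
`AᵏΨ`, `k ≤ 3`, is invariant under `Q` and `A`; it contains `Ψ`, hence every `wΨ`. -/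

section ParaSusy

variable {𝓗 : Type*} [NormedAddCommGroup 𝓗] [InnerProductSpace ℂ 𝓗] [CompleteSpace 𝓗]

theorem exists_adjoint_apply_pow_succ_eq_smul {Q H : 𝓗 →L[ℂ] 𝓗}
    (hii : Q ^ 3 * adjoint Q + Q ^ 2 * adjoint Q * Q + Q * adjoint Q * Q ^ 2
      + adjoint Q * Q ^ 3 = 6 * (Q ^ 2 * H))
    (hiii : Q * (adjoint Q) ^ 2 * Q = adjoint Q * Q ^ 2 * adjoint Q) (hQ4 : Q ^ 4 = 0)
    {Ψ : 𝓗} (hS : ∀ A ∈ opSetS Q H, ∃ μ : ℂ, A Ψ = μ • Ψ) (k : ℕ) :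
    ∃ μ : ℂ, adjoint Q ((Q ^ (k + 1)) Ψ) = μ • (Q ^ k) Ψ := by
  obtain ⟨E, hE⟩ := hS H (by simp [opSetS])
  obtain ⟨a, ha⟩ := hS (Q * adjoint Q) (by simp [opSetS])
  obtain ⟨b, hb⟩ := hS (adjoint Q * Q) (by simp [opSetS])
  obtain ⟨d, hd⟩ := hS (adjoint Q ^ 2 * Q ^ 2) (by simp [opSetS])
  simp only [mul_apply_eq_comp, pow_succ, pow_zero, one_mul] at ha hb hd
  have h1 : ∃ μ : ℂ, adjoint Q (Q (Q Ψ)) = μ • Q Ψ := by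
    have h := congr($hiii (Q Ψ))
    simp only [mul_apply_eq_comp, pow_succ, pow_zero, one_mul, hb, hd, map_smul] at h
    rcases eq_or_ne b 0 with rfl | hb0
    · have hQΨ : Q Ψ = 0 := by
        simpa using SetLike.ext_iff.mp (ker_adjoint_comp_self Q) Ψ |>.mp (by simpa using hb)
      exact ⟨0, by simp [hQΨ]⟩
    · exact ⟨d / b, by rw [← smul_right_inj hb0, smul_smul, mul_div_cancel₀ _ hb0, h]⟩
  match k with
  | 0 => exact ⟨b, by simpa using hb⟩
  | 1 => simpa [pow_succ] using h1
  | 2 =>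
    obtain ⟨μ, hμ⟩ := h1
    have h := congr($hii Ψ)
    simp only [mul_apply_eq_comp, add_apply, pow_succ, pow_zero, one_mul, ha, hb, hE, hμ,
      map_smul, ofNat_apply] at h
    refine ⟨6 * E - a - b - μ, ?_⟩
    simp only [mul_apply_eq_comp, pow_succ, pow_zero, one_mul]
    linear_combination (norm := module) h
  | k + 3 => exact ⟨0, by rw [show k + 3 + 1 = k + 4 by ring, pow_add, hQ4]; simp⟩

def ladderStates (Q : 𝓗 →L[ℂ] 𝓗) (Ψ : 𝓗) : Set 𝓗 :=
  {v | ∃ (lam : ℂ) (k : ℕ), k ≤ 3 ∧ (v = lam • (Q ^ k) Ψ ∨ v = lam • ((adjoint Q) ^ k) Ψ)}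

theorem ladderStates_adjoint (Q : 𝓗 →L[ℂ] 𝓗) (Ψ : 𝓗) :
    ladderStates (adjoint Q) Ψ = ladderStates Q Ψ := by
  ext v
  simp only [ladderStates, adjoint_adjoint, Set.mem_ofPred_eq, or_comm]

theorem wordOp_apply_mem_ladderStates {Q : 𝓗 →L[ℂ] 𝓗} {Ψ : 𝓗}
    (hQ : Set.MapsTo Q (ladderStates Q Ψ) (ladderStates Q Ψ))
    (hA : Set.MapsTo (adjoint Q) (ladderStates Q Ψ) (ladderStates Q Ψ)) (w : List Bool) :
    wordOp Q w Ψ ∈ ladderStates Q Ψ := by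
  induction w with
  | nil => exact ⟨1, 0, by norm_num, .inl (by simp [wordOp])⟩
  | cons b w ih =>
    cases b
    · simpa [wordOp, mul_apply_eq_comp] using hA ih
    · simpa [wordOp, mul_apply_eq_comp] using hQ ih

theorem mapsTo_ladderStates {Q H : 𝓗 →L[ℂ] 𝓗}
    (hiii : Q * (adjoint Q) ^ 2 * Q = adjoint Q * Q ^ 2 * adjoint Q)
    (hiv : (adjoint Q) ^ 3 * Q + (adjoint Q) ^ 2 * Q * adjoint Q
      + adjoint Q * Q * (adjoint Q) ^ 2 + Q * (adjoint Q) ^ 3 = 6 * ((adjoint Q) ^ 2 * H))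
    (hQ4 : Q ^ 4 = 0) (hQd4 : (adjoint Q) ^ 4 = 0)
    {Ψ : 𝓗} (hS : ∀ A ∈ opSetS Q H, ∃ μ : ℂ, A Ψ = μ • Ψ) :
    Set.MapsTo Q (ladderStates Q Ψ) (ladderStates Q Ψ) := by
  rintro v ⟨lam, k, hk, rfl | rfl⟩
  · rcases Nat.lt_or_eq_of_le hk with hk | rfl
    · exact ⟨lam, k + 1, hk, .inl (by rw [map_smul, pow_succ', mul_apply_eq_comp])⟩
    · refine ⟨0, 0, Nat.zero_le 3, .inl ?_⟩
      rw [map_smul, ← mul_apply_eq_comp, ← pow_succ', hQ4]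
      simp
  · rcases k with _ | k
    · exact ⟨lam, 1, by norm_num, .inl (by simp)⟩
    · obtain ⟨μ, hμ⟩ := exists_adjoint_apply_pow_succ_eq_smul (Q := adjoint Q) (H := H)
        (by simpa only [adjoint_adjoint] using hiv)
        (by simpa only [adjoint_adjoint] using hiii.symm) hQd4 (by rwa [opSetS_adjoint]) k
      rw [adjoint_adjoint] at hμ
      exact ⟨lam * μ, k, by omega, .inr (by rw [map_smul, hμ, smul_smul])⟩

end ParaSusy

theorem stmt6_general {𝓗 : Type*} [NormedAddCommGroup 𝓗] [InnerProductSpace ℂ 𝓗] [CompleteSpace 𝓗]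
    (Q H : 𝓗 →L[ℂ] 𝓗)
    (hii : Q ^ 3 * adjoint Q + Q ^ 2 * adjoint Q * Q + Q * adjoint Q * Q ^ 2
      + adjoint Q * Q ^ 3 = 6 * (Q ^ 2 * H))
    (hiii : Q * (adjoint Q) ^ 2 * Q = adjoint Q * Q ^ 2 * adjoint Q)
    (hiv : (adjoint Q) ^ 3 * Q + (adjoint Q) ^ 2 * Q * adjoint Q
      + adjoint Q * Q * (adjoint Q) ^ 2 + Q * (adjoint Q) ^ 3 = 6 * ((adjoint Q) ^ 2 * H))
    (hQ4 : Q ^ 4 = 0) (hQd4 : (adjoint Q) ^ 4 = 0)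
    (Ψ : 𝓗) (hΨ : IsSimulEig Q H Ψ) (w : List Bool) :
    ∃ (lam : ℂ) (k : ℕ), k ≤ 3 ∧
      (wordOp Q w Ψ = lam • (Q ^ k) Ψ ∨ wordOp Q w Ψ = lam • ((adjoint Q) ^ k) Ψ) := by
  obtain ⟨-, hS⟩ := hΨ
  have hSd : ∀ A ∈ opSetS (adjoint Q) H, ∃ μ : ℂ, A Ψ = μ • Ψ := by rwa [opSetS_adjoint]
  have hQ := mapsTo_ladderStates hiii hiv hQ4 hQd4 hS
  have hA := mapsTo_ladderStates (Q := adjoint Q)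
    (by simpa only [adjoint_adjoint] using hiii.symm) (by simpa only [adjoint_adjoint] using hii)
    hQd4 (by rwa [adjoint_adjoint]) hSd
  rw [ladderStates_adjoint] at hA
  exact wordOp_apply_mem_ladderStates hQ hA w

/-- Assuming the p=3 parasupersymmetry algebra, if `Ψ` is a simultaneous
eigenvector of `S`, then for every finite word `w` in the letters `Q`, `Q†`, there are a
scalar `λ` and `k ≤ 3` with `wΨ = λ • QᵏΨ` or `wΨ = λ • (Q†)ᵏΨ`. -/
theorem stmt6 {𝓗 : Type*} [NormedAddCommGroup 𝓗] [InnerProductSpace ℂ 𝓗] [CompleteSpace 𝓗]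
    (Q H : 𝓗 →L[ℂ] 𝓗) (hH : IsSelfAdjoint H)
    (hQH : Q * H = H * Q) (hQdH : adjoint Q * H = H * adjoint Q)
    (hii : Q ^ 3 * adjoint Q + Q ^ 2 * adjoint Q * Q + Q * adjoint Q * Q ^ 2
      + adjoint Q * Q ^ 3 = 6 * (Q ^ 2 * H))
    (hiii : Q * (adjoint Q) ^ 2 * Q = adjoint Q * Q ^ 2 * adjoint Q)
    (hiv : (adjoint Q) ^ 3 * Q + (adjoint Q) ^ 2 * Q * adjoint Q
      + adjoint Q * Q * (adjoint Q) ^ 2 + Q * (adjoint Q) ^ 3 = 6 * ((adjoint Q) ^ 2 * H))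
    (hQ4 : Q ^ 4 = 0) (hQd4 : (adjoint Q) ^ 4 = 0)
    (Ψ : 𝓗) (hΨ : IsSimulEig Q H Ψ) (w : List Bool) :
    ∃ (lam : ℂ) (k : ℕ), k ≤ 3 ∧
      (wordOp Q w Ψ = lam • (Q ^ k) Ψ ∨ wordOp Q w Ψ = lam • ((adjoint Q) ^ k) Ψ) :=
  stmt6_general Q H hii hiii hiv hQ4 hQd4 Ψ hΨ w
end

section
/- (Proposition 4) Assume the p=3 parasupersymmetry algebra. If Ψ₁ and Ψ₂ are simultaneous eigenvectors of S and Ψ₁ ∉ F(Ψ₂), then F(Ψ₁) ∩ F(Ψ₂) = {0}. -/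
open ContinuousLinearMap

/-- The family `F(Ψ)`: the smallest linear subspace of `𝓗` containing `Ψ` and invariant
under both `Q` and `Q†`. -/
def family {𝓗 : Type*} [NormedAddCommGroup 𝓗] [InnerProductSpace ℂ 𝓗] [CompleteSpace 𝓗]
    (Q : 𝓗 →L[ℂ] 𝓗) (Ψ : 𝓗) : Submodule ℂ 𝓗 :=
  sInf {p : Submodule ℂ 𝓗 | Ψ ∈ p ∧ (∀ x ∈ p, Q x ∈ p) ∧ ∀ x ∈ p, adjoint Q x ∈ p}

/-!
A simultaneous eigenvector `Ψ` stays, under `Q` and `Q†`, a common eigenvector of `H`, `QQ†`,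
`Q†Q`, `Q²Q†²` and `Q†²Q²`: relation (iii) applied to `QΨ` gives `Q†Q²Ψ ∈ ℂ QΨ`, and then
relation (ii) applied to `Ψ` gives `Q†Q³Ψ ∈ ℂ Q²Ψ`. So if `B = Q†ˢΨ` is the bottom of the ladder
(`Q†B = 0`), the span of `B, QB, Q²B, …` is invariant under `Q` and `Q†` and contains `Ψ`, hence
contains `F(Ψ)`. Any nonzero vector of this span is pushed by a power of `Q` onto a multiple of the
top vector `QⁿB`, and `Q†ⁿQⁿB` is a nonzero multiple of `B`, because `Q†Q x = 0` forces `Q x = 0`.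
Thus `F(x) = F(Ψ)` for every nonzero `x ∈ F(Ψ)`, and a nonzero vector of `F(Ψ₁) ∩ F(Ψ₂)` would
put `Ψ₁` into `F(Ψ₂)`.
-/

section

open Submodule Set

theorem apply_mem_span_singleton {A M N F : Type*} [Semiring A] [AddCommMonoid M] [Module A M]
    [AddCommMonoid N] [Module A N] [FunLike F M N] [LinearMapClass F A M N] (f : F) {x y : M}
    (h : y ∈ A ∙ x) : f y ∈ A ∙ f x := by
  obtain ⟨a, rfl⟩ := mem_span_singleton.mp h
  exact mem_span_singleton.mpr ⟨a, (map_smul f a x).symm⟩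

theorem apply_mem_span_range {A M ι : Type*} [Semiring A] [AddCommMonoid M] [Module A M]
    {f : M →ₗ[A] M} {v : ι → M} {x : M} (h : ∀ i, f (v i) ∈ span A (range v))
    (hx : x ∈ span A (range v)) : f x ∈ span A (range v) :=
  (span_le (p := (span A (range v)).comap f)).mpr (range_subset_iff.mpr h) hx

section CyclicSpan

variable {K V : Type*} [Field K] [AddCommGroup V] [Module K V]

theorem range_pow_apply_eq_insert (T : Module.End K V) (b : V) :
    range (fun i => (T ^ i) b) = insert b (range fun i => (T ^ i) (T b)) := by
  rw [← Nat.range_of_succ, Set.insert_eq]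
  simp only [Function.comp_def, pow_zero, Module.End.one_apply, pow_succ, Module.End.mul_apply]

theorem pow_apply_eq_zero_of_mem_span_pow_apply_apply {T : Module.End K V} {n : ℕ} {b z : V}
    (hb : (T ^ (n + 1)) b = 0) (hz : z ∈ span K (range fun i => (T ^ i) (T b))) :
    (T ^ n) z = 0 := by
  refine (span_le (p := LinearMap.ker (T ^ n))).mpr ?_ hz
  rintro _ ⟨i, rfl⟩
  rw [SetLike.mem_coe, LinearMap.mem_ker, ← Module.End.mul_apply, ← Module.End.mul_apply,
    mul_assoc, ← pow_succ, ← pow_add, Nat.add_left_comm, pow_add, Module.End.mul_apply, hb,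
    map_zero]

/-- Write `y = c • b + z` with `z` in the cyclic span of `T b`: if `c ≠ 0` then
`Tⁿ y = c • Tⁿ b`, and if `c = 0` we recurse on `T b`. -/
theorem pow_apply_mem_span_pow_apply_of_mem {T : Module.End K V} {n : ℕ} {b y : V}
    (hb : (T ^ (n + 1)) b = 0) (hy : y ∈ span K (range fun i => (T ^ i) b)) (hy0 : y ≠ 0) :
    (T ^ n) b ∈ span K (range fun i => (T ^ i) y) := by
  rw [range_pow_apply_eq_insert] at hy
  obtain ⟨c, z, hz, rfl⟩ := mem_span_insert.mp hy
  have hTz := pow_apply_eq_zero_of_mem_span_pow_apply_apply hb hz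
  by_cases hc : c = 0
  · subst hc
    rw [zero_smul, zero_add] at hy0 ⊢
    cases n with
    | zero => exact absurd hTz (by simpa using hy0)
    | succ m =>
      rw [pow_succ, Module.End.mul_apply]
      exact pow_apply_mem_span_pow_apply_of_mem
        (by rwa [← Module.End.mul_apply, ← pow_succ]) hz hy0
  · have hTy : (T ^ n) (c • b + z) = c • (T ^ n) b := by
      rw [map_add, hTz, add_zero, map_smul]
    rw [← inv_smul_smul₀ hc ((T ^ n) b), ← hTy]
    exact smul_mem _ _ (subset_span ⟨n, rfl⟩)

end CyclicSpan

variable {𝓗 : Type*} [NormedAddCommGroup 𝓗] [InnerProductSpace ℂ 𝓗] [CompleteSpace 𝓗]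

theorem apply_eq_zero_of_adjoint_apply_eq_zero {A : 𝓗 →L[ℂ] 𝓗} {x : 𝓗}
    (h : adjoint A (A x) = 0) : A x = 0 := by
  have hx : x ∈ (adjoint A ∘L A).ker := LinearMap.mem_ker.mpr h
  rwa [ker_adjoint_comp_self] at hx

section Family

variable {Q : 𝓗 →L[ℂ] 𝓗} {Ψ x : 𝓗}

theorem family_le {p : Submodule ℂ 𝓗} (hΨ : Ψ ∈ p) (hQ : ∀ x ∈ p, Q x ∈ p)
    (hQ' : ∀ x ∈ p, adjoint Q x ∈ p) : family Q Ψ ≤ p :=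
  sInf_le ⟨hΨ, hQ, hQ'⟩

theorem mem_family_self : Ψ ∈ family Q Ψ :=
  mem_sInf.mpr fun _ hp => hp.1

theorem apply_mem_family (hx : x ∈ family Q Ψ) : Q x ∈ family Q Ψ :=
  mem_sInf.mpr fun p hp => hp.2.1 x (mem_sInf.mp hx p hp)

theorem adjoint_apply_mem_family (hx : x ∈ family Q Ψ) : adjoint Q x ∈ family Q Ψ :=
  mem_sInf.mpr fun p hp => hp.2.2 x (mem_sInf.mp hx p hp)

theorem pow_apply_mem_family (n : ℕ) (hx : x ∈ family Q Ψ) : (Q ^ n) x ∈ family Q Ψ := by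
  simpa only [← toLinearMap_pow, coe_coe] using
    Module.End.pow_apply_mem_of_forall_mem n (fun _ => apply_mem_family) x hx

theorem adjoint_pow_apply_mem_family (n : ℕ) (hx : x ∈ family Q Ψ) :
    (adjoint Q ^ n) x ∈ family Q Ψ := by
  simpa only [← toLinearMap_pow, coe_coe] using
    Module.End.pow_apply_mem_of_forall_mem n (fun _ => adjoint_apply_mem_family) x hx

theorem family_le_of_mem (hx : x ∈ family Q Ψ) : family Q x ≤ family Q Ψ :=
  family_le hx (fun _ => apply_mem_family) (fun _ => adjoint_apply_mem_family)

theorem family_zero : family Q 0 = ⊥ :=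
  eq_bot_iff.mpr <| family_le (zero_mem ⊥)
    (fun _ hx => by rw [(mem_bot ℂ).mp hx, map_zero]; exact zero_mem ⊥)
    (fun _ hx => by rw [(mem_bot ℂ).mp hx, map_zero]; exact zero_mem ⊥)

end Family

section Ladder

variable {R : 𝓗 →L[ℂ] 𝓗} {B : 𝓗}

theorem mem_span_singleton_pow_apply_adjoint_pow_apply {Φ : 𝓗} {k : ℕ}
    (hΦ : ∀ j, R (adjoint R ((adjoint R ^ j) Φ)) ∈ ℂ ∙ (adjoint R ^ j) Φ)
    (hk : (adjoint R ^ k) Φ ≠ 0) : Φ ∈ ℂ ∙ (R ^ k) ((adjoint R ^ k) Φ) := by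
  induction k with
  | zero => exact mem_span_singleton_self Φ
  | succ k ih =>
    set y := (adjoint R ^ k) Φ
    have hy : adjoint R y ≠ 0 := by rwa [pow_succ', mul_apply_eq_comp] at hk
    obtain ⟨a, ha⟩ := mem_span_singleton.mp (hΦ k)
    have ha0 : a ≠ 0 := by
      rintro rfl
      refine hy (apply_eq_zero_of_adjoint_apply_eq_zero ?_)
      rw [adjoint_adjoint, ← ha, zero_smul]
    rw [pow_succ' (adjoint R), mul_apply_eq_comp, pow_succ, mul_apply_eq_comp, ← ha, map_smul,
      span_singleton_smul_eq (IsUnit.mk0 a ha0)]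
    exact ih fun h => hy (by rw [h, map_zero])

theorem family_le_span_pow_apply {Ψ : 𝓗} (hB : adjoint R B = 0)
    (hladder : ∀ i, adjoint R (R ((R ^ i) B)) ∈ ℂ ∙ (R ^ i) B)
    (hΨ : Ψ ∈ span ℂ (range fun i => (R ^ i) B)) :
    family R Ψ ≤ span ℂ (range fun i => (R ^ i) B) := by
  refine family_le hΨ (fun _ => apply_mem_span_range fun i => ?_)
    (fun _ => apply_mem_span_range fun i => ?_)
  · rw [coe_coe, ← mul_apply_eq_comp, ← pow_succ']
    exact subset_span (mem_range_self (i + 1))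
  · rw [coe_coe]
    cases i with
    | zero => rw [pow_zero, one_apply_eq_self, hB]; exact zero_mem _
    | succ i =>
      rw [pow_succ', mul_apply_eq_comp]
      exact (span_singleton_le_iff_mem _ _).mpr (subset_span (mem_range_self i)) (hladder i)

theorem mem_family_of_mem_span_pow_apply {n : ℕ} {x : 𝓗}
    (hladder : ∀ i, adjoint R (R ((R ^ i) B)) ∈ ℂ ∙ (R ^ i) B)
    (hn : (R ^ n) B ≠ 0) (hn' : (R ^ (n + 1)) B = 0)
    (hx : x ∈ span ℂ (range fun i => (R ^ i) B)) (hx0 : x ≠ 0) : B ∈ family R x := by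
  have htop : (R ^ n) B ∈ family R x := by
    have := pow_apply_mem_span_pow_apply_of_mem (T := (R : 𝓗 →ₗ[ℂ] 𝓗))
      (by rwa [← toLinearMap_pow, coe_coe]) (by simpa only [← toLinearMap_pow, coe_coe]) hx0
    simp only [← toLinearMap_pow, coe_coe] at this
    refine span_le.mpr ?_ this
    rintro _ ⟨i, rfl⟩
    exact pow_apply_mem_family i mem_family_self
  have hB : B ∈ ℂ ∙ (adjoint R ^ n) ((R ^ n) B) := by
    simpa only [adjoint_adjoint] using mem_span_singleton_pow_apply_adjoint_pow_apply
      (R := adjoint R) (by simpa only [adjoint_adjoint] using hladder)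
      (by simpa only [adjoint_adjoint] using hn)
  exact (span_singleton_le_iff_mem _ _).mpr (adjoint_pow_apply_mem_family n htop) hB

theorem family_eq_of_mem_of_ne_zero {N : ℕ} (hR : R ^ N = 0) {P : 𝓗 → Prop}
    (hP_apply : ∀ Φ, P Φ → P (R Φ)) (hP_adjoint_apply : ∀ Φ, P Φ → P (adjoint R Φ))
    (hP_lower : ∀ Φ, P Φ → adjoint R (R Φ) ∈ ℂ ∙ Φ)
    (hP_raise : ∀ Φ, P Φ → R (adjoint R Φ) ∈ ℂ ∙ Φ)
    {Ψ x : 𝓗} (hΨ : P Ψ) (hx : x ∈ family R Ψ) (hx0 : x ≠ 0) : family R x = family R Ψ := by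
  have hΨ0 : Ψ ≠ 0 := by
    rintro rfl
    rw [family_zero, mem_bot] at hx
    exact hx0 hx
  have hP_pow {T : 𝓗 →L[ℂ] 𝓗} (hT : ∀ Φ, P Φ → P (T Φ)) (i : ℕ) {Φ : 𝓗} (hΦ : P Φ) :
      P ((T ^ i) Φ) := by
    rw [pow_apply_eq_iterate]
    exact Function.Iterate.rec P hΦ hT i
  obtain ⟨s, hs, hs'⟩ : ∃ s, (adjoint R ^ s) Ψ ≠ 0 ∧ (adjoint R ^ (s + 1)) Ψ = 0 :=
    Nat.exists_not_and_succ_of_not_zero_of_exists (by simpa using hΨ0)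
      ⟨N, by rw [← star_eq_adjoint, ← star_pow, hR, star_zero, zero_apply]⟩
  set B := (adjoint R ^ s) Ψ
  have hladder (i : ℕ) : adjoint R (R ((R ^ i) B)) ∈ ℂ ∙ (R ^ i) B :=
    hP_lower _ (hP_pow hP_apply i (hP_pow hP_adjoint_apply s hΨ))
  have hΨB : Ψ ∈ ℂ ∙ (R ^ s) B :=
    mem_span_singleton_pow_apply_adjoint_pow_apply
      (fun j => hP_raise _ (hP_pow hP_adjoint_apply j hΨ)) hs
  obtain ⟨n, hn, hn'⟩ : ∃ n, (R ^ n) B ≠ 0 ∧ (R ^ (n + 1)) B = 0 :=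
    Nat.exists_not_and_succ_of_not_zero_of_exists (by simpa using hs) ⟨N, by rw [hR, zero_apply]⟩
  have hFΨ := family_le_span_pow_apply (by rwa [pow_succ', mul_apply_eq_comp] at hs') hladder
    ((span_singleton_le_iff_mem _ _).mpr (subset_span (mem_range_self s)) hΨB)
  have hB : B ∈ family R x := mem_family_of_mem_span_pow_apply hladder hn hn' (hFΨ hx) hx0
  exact le_antisymm (family_le_of_mem hx) (family_le_of_mem (family_le_of_mem hB
    ((span_singleton_le_iff_mem _ _).mpr (pow_apply_mem_family s mem_family_self) hΨB)))

end Ladder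

/-- Unlike `IsSimulEig`, this condition is inherited by `Q Ψ` and `Q† Ψ` (the zero vector is
allowed). -/
structure IsLadderState (Q H : 𝓗 →L[ℂ] 𝓗) (Ψ : 𝓗) : Prop where
  hamiltonian : H Ψ ∈ ℂ ∙ Ψ
  lower_raise : adjoint Q (Q Ψ) ∈ ℂ ∙ Ψ
  raise_lower : Q (adjoint Q Ψ) ∈ ℂ ∙ Ψ
  lower_raise_sq : adjoint Q (adjoint Q (Q (Q Ψ))) ∈ ℂ ∙ Ψ
  raise_lower_sq : Q (Q (adjoint Q (adjoint Q Ψ))) ∈ ℂ ∙ Ψ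

namespace IsLadderState

variable {Q H : 𝓗 →L[ℂ] 𝓗} {Ψ : 𝓗}

theorem of_isSimulEig (h : IsSimulEig Q H Ψ) : IsLadderState Q H Ψ := by
  have eig (A : 𝓗 →L[ℂ] 𝓗) (hA : A ∈ opSetS Q H) : A Ψ ∈ ℂ ∙ Ψ := by
    obtain ⟨μ, hμ⟩ := h.2 A hA
    exact mem_span_singleton.mpr ⟨μ, hμ.symm⟩
  have h₁ := eig (adjoint Q * Q) (by simp [opSetS])
  have h₂ := eig (Q * adjoint Q) (by simp [opSetS])
  have h₃ := eig (adjoint Q ^ 2 * Q ^ 2) (by simp [opSetS])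
  have h₄ := eig (Q ^ 2 * adjoint Q ^ 2) (by simp [opSetS])
  simp only [mul_apply_eq_comp, pow_succ, pow_zero, one_apply_eq_self] at h₁ h₂ h₃ h₄
  exact ⟨eig H (by simp [opSetS]), h₁, h₂, h₃, h₄⟩

theorem toAdjoint (h : IsLadderState Q H Ψ) : IsLadderState (adjoint Q) H Ψ where
  hamiltonian := h.hamiltonian
  lower_raise := by simpa only [adjoint_adjoint] using h.raise_lower
  raise_lower := by simpa only [adjoint_adjoint] using h.lower_raise
  lower_raise_sq := by simpa only [adjoint_adjoint] using h.raise_lower_sq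
  raise_lower_sq := by simpa only [adjoint_adjoint] using h.lower_raise_sq

/-- Relation (iii) applied to `Q Ψ` reads `δ • Q Ψ = β • Q† (Q (Q Ψ))`, where `Q† Q Ψ = β • Ψ`
and `Q†² Q² Ψ = δ • Ψ`; and `β = 0` forces `Q Ψ = 0`. -/
theorem lower_raise_apply (hiii : Q * adjoint Q ^ 2 * Q = adjoint Q * Q ^ 2 * adjoint Q)
    (h : IsLadderState Q H Ψ) : adjoint Q (Q (Q Ψ)) ∈ ℂ ∙ Q Ψ := by
  obtain ⟨β, hβ⟩ := mem_span_singleton.mp h.lower_raise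
  obtain ⟨δ, hδ⟩ := mem_span_singleton.mp h.lower_raise_sq
  have hrel := DFunLike.congr_fun hiii (Q Ψ)
  simp only [mul_apply_eq_comp, sq] at hrel
  rw [← hδ, ← hβ, map_smul, map_smul, map_smul, map_smul] at hrel
  by_cases hβ0 : β = 0
  · rw [apply_eq_zero_of_adjoint_apply_eq_zero (by rw [← hβ, hβ0, zero_smul]), map_zero,
      map_zero]
    exact zero_mem _
  · rw [← inv_smul_smul₀ hβ0 (adjoint Q (Q (Q Ψ))), ← hrel, smul_smul]
    exact smul_mem _ _ (mem_span_singleton_self _)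

theorem lower_raise_apply_apply
    (hii : Q ^ 3 * adjoint Q + Q ^ 2 * adjoint Q * Q + Q * adjoint Q * Q ^ 2
      + adjoint Q * Q ^ 3 = 6 * (Q ^ 2 * H))
    (hiii : Q * adjoint Q ^ 2 * Q = adjoint Q * Q ^ 2 * adjoint Q)
    (h : IsLadderState Q H Ψ) : adjoint Q (Q (Q (Q Ψ))) ∈ ℂ ∙ Q (Q Ψ) := by
  have hrel := DFunLike.congr_fun hii Ψ
  simp only [add_apply, mul_apply_eq_comp, pow_succ, pow_zero, one_apply_eq_self,
    ofNat_apply] at hrel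
  rw [eq_sub_of_add_eq' hrel]
  refine sub_mem (nsmul_mem (apply_mem_span_singleton Q
    (apply_mem_span_singleton Q h.hamiltonian)) 6) (add_mem (add_mem ?_ ?_) ?_)
  · exact apply_mem_span_singleton Q (apply_mem_span_singleton Q h.raise_lower)
  · exact apply_mem_span_singleton Q (apply_mem_span_singleton Q h.lower_raise)
  · exact apply_mem_span_singleton Q (h.lower_raise_apply hiii)

theorem apply (hQH : Q * H = H * Q)
    (hii : Q ^ 3 * adjoint Q + Q ^ 2 * adjoint Q * Q + Q * adjoint Q * Q ^ 2
      + adjoint Q * Q ^ 3 = 6 * (Q ^ 2 * H))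
    (hiii : Q * adjoint Q ^ 2 * Q = adjoint Q * Q ^ 2 * adjoint Q)
    (h : IsLadderState Q H Ψ) : IsLadderState Q H (Q Ψ) where
  hamiltonian := by
    rw [← mul_apply_eq_comp, ← hQH, mul_apply_eq_comp]
    exact apply_mem_span_singleton Q h.hamiltonian
  lower_raise := h.lower_raise_apply hiii
  raise_lower := apply_mem_span_singleton Q h.lower_raise
  lower_raise_sq := mem_span_singleton_trans
    (apply_mem_span_singleton (adjoint Q) (h.lower_raise_apply_apply hii hiii))
    (h.lower_raise_apply hiii)
  raise_lower_sq := mem_span_singleton_trans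
    (apply_mem_span_singleton Q (apply_mem_span_singleton Q
      (apply_mem_span_singleton (adjoint Q) h.lower_raise)))
    (apply_mem_span_singleton Q h.raise_lower)

theorem adjoint_apply (hQdH : adjoint Q * H = H * adjoint Q)
    (hiv : adjoint Q ^ 3 * Q + adjoint Q ^ 2 * Q * adjoint Q
      + adjoint Q * Q * adjoint Q ^ 2 + Q * adjoint Q ^ 3 = 6 * (adjoint Q ^ 2 * H))
    (hiii : Q * adjoint Q ^ 2 * Q = adjoint Q * Q ^ 2 * adjoint Q)
    (h : IsLadderState Q H Ψ) : IsLadderState Q H (adjoint Q Ψ) := by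
  simpa only [adjoint_adjoint] using (h.toAdjoint.apply hQdH (by rwa [adjoint_adjoint])
    (by rw [adjoint_adjoint]; exact hiii.symm)).toAdjoint

end IsLadderState

end

theorem stmt8_general {𝓗 : Type*} [NormedAddCommGroup 𝓗] [InnerProductSpace ℂ 𝓗] [CompleteSpace 𝓗]
    (Q H : 𝓗 →L[ℂ] 𝓗)
    (hQH : Q * H = H * Q) (hQdH : adjoint Q * H = H * adjoint Q)
    (hii : Q ^ 3 * adjoint Q + Q ^ 2 * adjoint Q * Q + Q * adjoint Q * Q ^ 2
      + adjoint Q * Q ^ 3 = 6 * (Q ^ 2 * H))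
    (hiii : Q * (adjoint Q) ^ 2 * Q = adjoint Q * Q ^ 2 * adjoint Q)
    (hiv : (adjoint Q) ^ 3 * Q + (adjoint Q) ^ 2 * Q * adjoint Q
      + adjoint Q * Q * (adjoint Q) ^ 2 + Q * (adjoint Q) ^ 3 = 6 * ((adjoint Q) ^ 2 * H))
    (hQ4 : Q ^ 4 = 0)
    (Ψ₁ Ψ₂ : 𝓗) (hΨ₁ : IsSimulEig Q H Ψ₁)
    (hnot : Ψ₁ ∉ family Q Ψ₂) :
    family Q Ψ₁ ⊓ family Q Ψ₂ = ⊥ := by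
  refine eq_bot_iff.mpr fun x hx => (Submodule.mem_bot ℂ).mpr (by_contra fun hx0 => hnot ?_)
  obtain ⟨hx₁, hx₂⟩ := Submodule.mem_inf.mp hx
  have hF : family Q x = family Q Ψ₁ :=
    family_eq_of_mem_of_ne_zero hQ4 (fun _ h => h.apply hQH hii hiii)
      (fun _ h => h.adjoint_apply hQdH hiv hiii) (fun _ h => h.lower_raise)
      (fun _ h => h.raise_lower) (IsLadderState.of_isSimulEig hΨ₁) hx₁ hx0
  exact family_le_of_mem hx₂ (hF ▸ mem_family_self)

/-- Proposition 4: Assuming the p=3 parasupersymmetry algebra, if `Ψ₁` and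
`Ψ₂` are simultaneous eigenvectors of `S` and `Ψ₁ ∉ F(Ψ₂)`, then `F(Ψ₁) ∩ F(Ψ₂) = {0}`. -/
theorem stmt8 {𝓗 : Type*} [NormedAddCommGroup 𝓗] [InnerProductSpace ℂ 𝓗] [CompleteSpace 𝓗]
    (Q H : 𝓗 →L[ℂ] 𝓗) (hH : IsSelfAdjoint H)
    (hQH : Q * H = H * Q) (hQdH : adjoint Q * H = H * adjoint Q)
    (hii : Q ^ 3 * adjoint Q + Q ^ 2 * adjoint Q * Q + Q * adjoint Q * Q ^ 2
      + adjoint Q * Q ^ 3 = 6 * (Q ^ 2 * H))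
    (hiii : Q * (adjoint Q) ^ 2 * Q = adjoint Q * Q ^ 2 * adjoint Q)
    (hiv : (adjoint Q) ^ 3 * Q + (adjoint Q) ^ 2 * Q * adjoint Q
      + adjoint Q * Q * (adjoint Q) ^ 2 + Q * (adjoint Q) ^ 3 = 6 * ((adjoint Q) ^ 2 * H))
    (hQ4 : Q ^ 4 = 0) (hQd4 : (adjoint Q) ^ 4 = 0)
    (Ψ₁ Ψ₂ : 𝓗) (hΨ₁ : IsSimulEig Q H Ψ₁) (hΨ₂ : IsSimulEig Q H Ψ₂)
    (hnot : Ψ₁ ∉ family Q Ψ₂) :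
    family Q Ψ₁ ⊓ family Q Ψ₂ = ⊥ :=
  stmt8_general Q H hQH hQdH hii hiii hiv hQ4 Ψ₁ Ψ₂ hΨ₁ hnot
end

section
/- Let c, c₀ ∈ ℝ and let K : ℝ → ℝ be twice continuously differentiable with K(0) = 0. Define W₁(x) = ½(−K'(x) + c₀e^{−K(x)} + c·e^{−K(x)}∫₀ˣ e^{K(t)} dt) and W₂(x) = ½(K'(x) + c₀e^{−K(x)} + c·e^{−K(x)}∫₀ˣ e^{K(t)} dt). Then W₂ − W₁ = K' and W₁, W₂ satisfy W₂² − W₁² + W₂' + W₁' = c identically on ℝ. -/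
open intervalIntegral Real

/-! `W₁ + W₂ = e^{-K}(c₀ + c∫₀ˣ e^K)` is the variation-of-constants solution of the linear
equation `F' + K' F = c`, and `W₂ - W₁ = K'`. Since `W₂² - W₁² = (W₂ - W₁)(W₂ + W₁)`, the
constraint `W₂² - W₁² + W₂' + W₁' = c` is exactly this linear equation. -/

theorem hasDerivAt_exp_neg_mul_integral_exp {K : ℝ → ℝ} (hK : Differentiable ℝ K)
    (c₀ c a x : ℝ) :
    HasDerivAt (fun x => c₀ * exp (-K x) + c * exp (-K x) * ∫ t in a..x, exp (K t))
      (c - deriv K x * (c₀ * exp (-K x) + c * exp (-K x) * ∫ t in a..x, exp (K t))) x := by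
  have hexpK : Continuous fun t => exp (K t) := continuous_exp.comp hK.continuous
  have hint : HasDerivAt (fun x => ∫ t in a..x, exp (K t)) (exp (K x)) x :=
    integral_hasDerivAt_right (hexpK.intervalIntegrable _ _)
      (hexpK.stronglyMeasurableAtFilter _ _) hexpK.continuousAt
  have hexp : HasDerivAt (fun x => exp (-K x)) (exp (-K x) * -deriv K x) x :=
    (hasDerivAt_exp _).comp x (hK x).hasDerivAt.neg
  have hinv : exp (-K x) * exp (K x) = 1 := by rw [← exp_add, neg_add_cancel, exp_zero]
  exact ((hexp.const_mul c₀).add ((hexp.const_mul c).mul hint)).congr_deriv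
    (by linear_combination c * hinv)

theorem sq_sub_sq_add_deriv_add_deriv_eq_of_hasDerivAt {F g : ℝ → ℝ} {c x : ℝ}
    (hF : HasDerivAt F (c - g x * F x) x) (hg : DifferentiableAt ℝ g x) :
    ((F x + g x) / 2) ^ 2 - ((F x - g x) / 2) ^ 2
      + deriv (fun y => (F y + g y) / 2) x + deriv (fun y => (F y - g y) / 2) x = c := by
  have hsum : HasDerivAt (fun y => (F y + g y) / 2) ((c - g x * F x + deriv g x) / 2) x :=
    (hF.add hg.hasDerivAt).div_const 2
  have hdiff : HasDerivAt (fun y => (F y - g y) / 2) ((c - g x * F x - deriv g x) / 2) x :=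
    (hF.sub hg.hasDerivAt).div_const 2
  rw [hsum.deriv, hdiff.deriv]
  ring

theorem stmt19_general (c c₀ : ℝ) (K : ℝ → ℝ) (hK : ContDiff ℝ 2 K)
    (W₁ W₂ : ℝ → ℝ)
    (hW₁ : W₁ = fun x => (1 / 2) * (-deriv K x + c₀ * Real.exp (-K x)
      + c * Real.exp (-K x) * ∫ t in (0 : ℝ)..x, Real.exp (K t)))
    (hW₂ : W₂ = fun x => (1 / 2) * (deriv K x + c₀ * Real.exp (-K x)
      + c * Real.exp (-K x) * ∫ t in (0 : ℝ)..x, Real.exp (K t))) :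
    (∀ x, W₂ x - W₁ x = deriv K x) ∧
    (∀ x, W₂ x ^ 2 - W₁ x ^ 2 + deriv W₂ x + deriv W₁ x = c) := by
  set F := fun x => c₀ * exp (-K x) + c * exp (-K x) * ∫ t in (0 : ℝ)..x, exp (K t)
  have hW₁F : W₁ = fun x => (F x - deriv K x) / 2 := by rw [hW₁]; ext; ring
  have hW₂F : W₂ = fun x => (F x + deriv K x) / 2 := by rw [hW₂]; ext; ring
  have hK' : Differentiable ℝ (deriv K) :=
    ((contDiff_succ_iff_deriv (n := 1)).mp hK).2.2.differentiable one_ne_zero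
  subst hW₁F hW₂F
  refine ⟨fun x => by ring, fun x => ?_⟩
  exact sq_sub_sq_add_deriv_add_deriv_eq_of_hasDerivAt
    (hasDerivAt_exp_neg_mul_integral_exp (hK.differentiable two_ne_zero) c₀ c 0 x) (hK' x)

/-- Given constants `c, c₀` and a C² function `K` with `K(0) = 0`, the
functions `W₁ = ½(−K' + c₀e^{−K} + c·e^{−K}∫₀ˣ e^{K})` and
`W₂ = ½(K' + c₀e^{−K} + c·e^{−K}∫₀ˣ e^{K})` satisfy `W₂ − W₁ = K'` and
`W₂² − W₁² + W₂' + W₁' = c` identically on `ℝ`. -/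
theorem stmt19 (c c₀ : ℝ) (K : ℝ → ℝ) (hK : ContDiff ℝ 2 K) (hK0 : K 0 = 0)
    (W₁ W₂ : ℝ → ℝ)
    (hW₁ : W₁ = fun x => (1 / 2) * (-deriv K x + c₀ * Real.exp (-K x)
      + c * Real.exp (-K x) * ∫ t in (0 : ℝ)..x, Real.exp (K t)))
    (hW₂ : W₂ = fun x => (1 / 2) * (deriv K x + c₀ * Real.exp (-K x)
      + c * Real.exp (-K x) * ∫ t in (0 : ℝ)..x, Real.exp (K t))) :
    (∀ x, W₂ x - W₁ x = deriv K x) ∧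
    (∀ x, W₂ x ^ 2 - W₁ x ^ 2 + deriv W₂ x + deriv W₁ x = c) :=
  stmt19_general c c₀ K hK W₁ W₂ hW₁ hW₂
end
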